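/- For every z in the open first quadrant Q = {z ∈ ℂ : Re z > 0, Im z > 0}, the real part of 1 + (1+i)·F(z) is strictly positive, where F(z) := (1/(2π))·(Log((1+z)/(1−z)) + i·Log((1+iz)/(1−iz))). -/

import Mathlib

open Complex

/-- `F(z) = (1/(2π))·(Log((1+z)/(1−z)) + i·Log((1+iz)/(1−iz)))`. -/
noncomputable def F (z : ℂ) : ℂ :=
  (1 / (2 * (Real.pi : ℂ))) *
    (Complex.log ((1 + z) / (1 - z)) + Complex.I * Complex.log ((1 + Complex.I * z) / (1 - Complex.I * z)))

/- For `u = z` and `u = iz` the points `(1 + u)/(1 - u)` have modulus `> 1` resp. `≤ 1`, because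
`|1 + u|² - |1 - u|² = 4 Re u`. Hence in `Re((1 + i)(Log w₁ + i Log w₂)) = log|w₁| - arg w₁ - log|w₂| - arg w₂`
the two logarithms contribute a strictly positive amount, while each argument is at most `π`;
so this real part exceeds `-2π`, which is exactly what `Re(1 + (1 + i)F(z)) > 0` asks for. -/

theorem norm_one_sub_lt_norm_one_add_iff {u : ℂ} : ‖1 - u‖ < ‖1 + u‖ ↔ 0 < u.re := by
  have hdiff : normSq (1 + u) = normSq (1 - u) + 4 * u.re := by
    simp only [normSq_apply, sub_re, sub_im, add_re, add_im, one_re, one_im]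
    ring
  rw [← sq_lt_sq₀ (norm_nonneg _) (norm_nonneg _), Complex.sq_norm, Complex.sq_norm, hdiff,
    lt_add_iff_pos_right, mul_pos_iff_of_pos_left four_pos]

theorem one_lt_norm_one_add_div_one_sub {u : ℂ} (hu : 0 < u.re) (hu1 : u ≠ 1) :
    1 < ‖(1 + u) / (1 - u)‖ := by
  rw [norm_div, one_lt_div (norm_pos_iff.mpr (sub_ne_zero.mpr hu1.symm))]
  exact norm_one_sub_lt_norm_one_add_iff.mpr hu

theorem norm_one_add_div_one_sub_lt_one {u : ℂ} (hu : u.re < 0) :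
    ‖(1 + u) / (1 - u)‖ < 1 := by
  have hlt : ‖1 + u‖ < ‖1 - u‖ := by
    simpa [sub_eq_add_neg] using
      norm_one_sub_lt_norm_one_add_iff.mpr (by simpa using hu : 0 < (-u).re)
  rw [norm_div, div_lt_one ((norm_nonneg _).trans_lt hlt)]
  exact hlt

theorem re_one_add_I_mul_log_add_I_mul_log (w₁ w₂ : ℂ) :
    ((1 + I) * (log w₁ + I * log w₂)).re =
      Real.log ‖w₁‖ - arg w₁ - Real.log ‖w₂‖ - arg w₂ := by
  simp only [mul_re, mul_im, add_re, add_im, one_re, one_im, I_re, I_im, log_re, log_im]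
  ring

theorem neg_two_pi_lt_re_one_add_I_mul_log_add_I_mul_log {w₁ w₂ : ℂ} (h₁ : 1 < ‖w₁‖)
    (h₂ : ‖w₂‖ ≤ 1) : -(2 * Real.pi) < ((1 + I) * (log w₁ + I * log w₂)).re := by
  rw [re_one_add_I_mul_log_add_I_mul_log]
  linarith [Real.log_pos h₁, Real.log_nonpos (norm_nonneg w₂) h₂, arg_le_pi w₁, arg_le_pi w₂]

/-- On the open first quadrant, `Re(1 + (1+i)·F(z)) > 0`. -/
theorem re_pos_of_first_quadrant (z : ℂ) (hre : 0 < z.re) (him : 0 < z.im) :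
    0 < (1 + (1 + Complex.I) * F z).re := by
  have h₁ : 1 < ‖(1 + z) / (1 - z)‖ :=
    one_lt_norm_one_add_div_one_sub hre fun h => by simp [h] at him
  have h₂ : ‖(1 + I * z) / (1 - I * z)‖ ≤ 1 :=
    (norm_one_add_div_one_sub_lt_one (by simpa using him)).le
  have hbound := neg_two_pi_lt_re_one_add_I_mul_log_add_I_mul_log h₁ h₂
  have hcoeff : 1 / (2 * (Real.pi : ℂ)) = ((2 * Real.pi)⁻¹ : ℝ) := by push_cast; ring
  rw [F, hcoeff, mul_left_comm, add_re, one_re, re_ofReal_mul]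
  have hinv : (2 * Real.pi)⁻¹ * (2 * Real.pi) = 1 := inv_mul_cancel₀ Real.two_pi_pos.ne'
  nlinarith [mul_pos (inv_pos.mpr Real.two_pi_pos) (neg_lt_iff_pos_add.mp hbound)]
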